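/- With Z as the matrix Z_{i,j} = ζ_{i-j+1} for j ≤ i, Z_{i,i+1} = i, Z_{i,j} = 0 for j > i+1, the cycle format polynomial CF_γ(Z) = Σ_{π of cycle type γ} Π_{i=1}^q Z_{i,π(i)} equals d_γ · ζ^γ, where d_γ is the number of permutations in S_q of cycle type γ and ζ^γ = ζ_{γ_1}···ζ_{γ_r}. -/

import Mathlib

open Equiv MvPolynomial

/-- Value of the irreducible character of `S_q` indexed by the partition `lam`
on permutations of cycle type `mu` (a multiset recording all cycle lengths,
including fixed points), via the Frobenius character formula:
`χ_λ(μ)` is the coefficient of `x^(λ+δ)` in `(∏_{i<j} (x_i - x_j)) · p_μ`. -/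
noncomputable def symCharMu {q : ℕ} (lam : Nat.Partition q) (mu : Multiset ℕ) : ℤ :=
  let L := lam.parts.sort (· ≥ ·)
  let l := L.length
  MvPolynomial.coeff
    (Finsupp.equivFunOnFinite.symm (fun i : Fin l => L.getD i 0 + (l - 1 - (i : ℕ))))
    ((∏ p ∈ Finset.univ.filter (fun p : Fin l × Fin l => p.1 < p.2), (X p.1 - X p.2)) *
      (mu.map (fun c => ∑ i : Fin l, (X i : MvPolynomial (Fin l) ℤ) ^ c)).prod)

/-- The irreducible character `χ_λ` of the symmetric group, evaluated at `g`. -/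
noncomputable def symChar {q : ℕ} (lam : Nat.Partition q) (g : Equiv.Perm (Fin q)) : ℤ :=
  symCharMu lam g.partition.parts

/-- The immanant `IM_λ(M) = Σ_π χ_λ(π) ∏ᵢ M_{i,π(i)}`. -/
noncomputable def immanant {q : ℕ} {K : Type*} [CommRing K]
    (lam : Nat.Partition q) (M : Matrix (Fin q) (Fin q) K) : K :=
  ∑ g : Equiv.Perm (Fin q), (symChar lam g : K) * ∏ i, M i (g i)

/-- The `i`-th part (0-indexed) of a partition, `0` if `i` exceeds the number of parts. -/
def Nat.Partition.part {q : ℕ} (lam : Nat.Partition q) (i : ℕ) : ℕ :=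
  (lam.parts.sort (· ≥ ·)).getD i 0

/-- The block diagonal matrix `diag(A, B)`. -/
def dsum {p q : ℕ} {K : Type*} [Zero K] (A : Matrix (Fin p) (Fin p) K)
    (B : Matrix (Fin q) (Fin q) K) : Matrix (Fin (p + q)) (Fin (p + q)) K :=
  Matrix.reindex finSumFinEquiv finSumFinEquiv (Matrix.fromBlocks A 0 0 B)

/-- `H_q`: the `q × q` matrix whose `(i,j)` entry is `1/i` (rows 1-indexed). -/
noncomputable def Hmat (K : Type*) [DivisionRing K] (q : ℕ) : Matrix (Fin q) (Fin q) K :=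
  fun i _ => (((i : ℕ) + 1 : K))⁻¹

/-- `T_q`: the matrix with `T_{i,j} = (-1)^(i-j)` for `j ≤ i`, `T_{i,i+1} = i`, else `0`
(1-indexed). -/
def Tmat (K : Type*) [Ring K] (q : ℕ) : Matrix (Fin q) (Fin q) K :=
  fun i j => if (j : ℕ) ≤ (i : ℕ) then (-1 : K) ^ ((i : ℕ) - (j : ℕ))
    else if (j : ℕ) = (i : ℕ) + 1 then ((i : ℕ) + 1 : K) else 0

/-- `E_q = D_q T_q` where `D_q = diag(1, 1/2, …, 1/q)`. -/
noncomputable def Emat (K : Type*) [Field K] (q : ℕ) : Matrix (Fin q) (Fin q) K :=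
  (Matrix.diagonal fun i : Fin q => (((i : ℕ) + 1 : K))⁻¹) * Tmat K q

/-- The column partition `(1^q)`. -/
def onePart (q : ℕ) : Nat.Partition q :=
  ⟨Multiset.replicate q 1, by intro i hi; simp only [Multiset.eq_of_mem_replicate hi]; norm_num, by simp⟩

/-- Littlewood's matrix `Z`, with `Z_{i,j} = ζ_{i-j+1}` for `j ≤ i`, `Z_{i,i+1} = i`,
and `Z_{i,j} = 0` for `j > i+1` (1-indexed), where `ζ_k` is the indeterminate `X k`. -/
noncomputable def Zmat (q : ℕ) : Matrix (Fin q) (Fin q) (MvPolynomial ℕ ℚ) :=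
  fun i j => if (j : ℕ) ≤ (i : ℕ) then X ((i : ℕ) - (j : ℕ) + 1)
    else if (j : ℕ) = (i : ℕ) + 1 then ((i : ℕ) + 1 : MvPolynomial ℕ ℚ) else 0

section CFaux
open Finset

-- L0: cycleType invariance under permCongr (cross-type conjugation)
theorem cycleType_permCongr' {α β : Type*} [Fintype α] [DecidableEq α] [Fintype β]
    [DecidableEq β] (e : α ≃ β) (σ : Equiv.Perm α) :
    Equiv.Perm.cycleType (e.permCongr σ) = σ.cycleType := by
  classical
  have : (e.permCongr σ) = σ.extendDomain (e.trans (Equiv.subtypeUnivEquiv (fun _ => trivial)).symm) := by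
    ext b
    rw [Equiv.Perm.extendDomain_apply_subtype _ _ trivial]
    simp [Equiv.permCongr_apply]
  rw [this, Equiv.Perm.cycleType_extendDomain]

noncomputable def eqSumL (α β : Type*) : α ≃ {s : α ⊕ β // s.isLeft = true} := by
  refine Equiv.ofBijective (fun x : α => ⟨Sum.inl x, rfl⟩) ⟨fun x y h => ?_, ?_⟩
  · simpa using Subtype.ext_iff.1 h
  · rintro ⟨x | y, hs⟩
    · exact ⟨x, rfl⟩
    · simp at hs

noncomputable def eqSumR (α β : Type*) : β ≃ {s : α ⊕ β // s.isRight = true} := by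
  refine Equiv.ofBijective (fun y : β => ⟨Sum.inr y, rfl⟩) ⟨fun x y h => ?_, ?_⟩
  · simpa using Subtype.ext_iff.1 h
  · rintro ⟨x | y, hs⟩
    · simp at hs
    · exact ⟨y, rfl⟩

theorem cycleType_sumCongr' {α β : Type*} [Fintype α] [DecidableEq α] [Fintype β]
    [DecidableEq β] (a : Equiv.Perm α) (b : Equiv.Perm β) :
    Equiv.Perm.cycleType (Equiv.sumCongr a b) = a.cycleType + b.cycleType := by
  classical
  have hL : Equiv.sumCongr a (1 : Equiv.Perm β) = a.extendDomain (eqSumL α β) := by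
    ext s
    rcases s with x | y
    · have hx : (Sum.inl x : α ⊕ β) = ((eqSumL α β) x : α ⊕ β) := rfl
      rw [hx, Equiv.Perm.extendDomain_apply_image]
      rfl
    · rw [Equiv.Perm.extendDomain_apply_not_subtype _ (eqSumL α β) (by simp)]
      rfl
  have hR : Equiv.sumCongr (1 : Equiv.Perm α) b = b.extendDomain (eqSumR α β) := by
    ext s
    rcases s with x | y
    · rw [Equiv.Perm.extendDomain_apply_not_subtype _ (eqSumR α β) (by simp)]
      rfl
    · have hy : (Sum.inr y : α ⊕ β) = ((eqSumR α β) y : α ⊕ β) := rfl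
      rw [hy, Equiv.Perm.extendDomain_apply_image]
      rfl
  have hdisj : Equiv.Perm.Disjoint (Equiv.sumCongr a (1 : Equiv.Perm β))
      (Equiv.sumCongr (1 : Equiv.Perm α) b) := by
    intro s
    rcases s with x | y
    · right; simp
    · left; simp
  have hmul : Equiv.sumCongr a b
      = Equiv.sumCongr a (1 : Equiv.Perm β) * Equiv.sumCongr (1 : Equiv.Perm α) b := by
    rw [Equiv.Perm.sumCongr_mul, mul_one, one_mul]
  rw [hmul, hdisj.cycleType_mul, hL, hR, Equiv.Perm.cycleType_extendDomain,
    Equiv.Perm.cycleType_extendDomain]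

theorem parts_decomp {n m : ℕ} (hm : 1 ≤ m) (hmn : m ≤ n)
    (σ : Equiv.Perm (Fin n)) (σ' : Equiv.Perm (Fin (n - m)))
    (h : σ.cycleType = σ'.cycleType + (finRotate m).cycleType) :
    σ.partition.parts = m ::ₘ σ'.partition.parts := by
  have hsupp : σ.support.card = σ.cycleType.sum := (Equiv.Perm.sum_cycleType σ).symm
  have hsupp' : σ'.support.card = σ'.cycleType.sum := (Equiv.Perm.sum_cycleType σ').symm
  have hs'le : σ'.cycleType.sum ≤ n - m := by
    rw [← hsupp']
    simpa using Finset.card_le_univ σ'.support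
  rw [Equiv.Perm.parts_partition, Equiv.Perm.parts_partition, hsupp, hsupp', Fintype.card_fin,
    Fintype.card_fin]
  rcases Nat.lt_or_ge m 2 with hm2 | hm2
  · -- m = 1
    interval_cases m
    have hrot : (finRotate 1).cycleType = 0 := by
      have : (finRotate 1) = 1 := Subsingleton.elim _ _
      rw [this, Equiv.Perm.cycleType_one]
    rw [hrot, add_zero] at h
    rw [h]
    have harith : n - σ'.cycleType.sum = (n - 1 - σ'.cycleType.sum) + 1 := by omega
    rw [harith, Multiset.replicate_succ, Multiset.add_cons]
  · -- m ≥ 2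
    have hrot : (finRotate m).cycleType = {m} := cycleType_finRotate_of_le hm2
    rw [hrot] at h
    rw [h]
    have harith : n - (σ'.cycleType + {m}).sum = (n - m - σ'.cycleType.sum) := by
      rw [Multiset.sum_add, Multiset.sum_singleton]
      omega
    rw [harith, ← Multiset.singleton_add]
    rw [show σ'.cycleType + {m} + Multiset.replicate (n - m - σ'.cycleType.sum) 1
      = {m} + (σ'.cycleType + Multiset.replicate (n - m - σ'.cycleType.sum) 1) by
        rw [add_comm (σ'.cycleType) ({m} : Multiset ℕ), add_assoc]]

-- product of filter card
theorem fin_filter_card (n i b : ℕ) (hb : b ≤ n) :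
    (Finset.univ.filter (fun v : Fin n => i ≤ v.1 ∧ v.1 < b)).card = b - i := by
  have : (Finset.univ.filter (fun v : Fin n => i ≤ v.1 ∧ v.1 < b)).card
      = (Finset.Ico i b).card := by
    apply Finset.card_bij (fun v _ => v.1)
    · intro v hv
      simp only [Finset.mem_filter] at hv
      simp [Finset.mem_Ico, hv.2.1, hv.2.2]
    · intro v _ w _ hvw
      exact Fin.ext hvw
    · intro k hk
      simp only [Finset.mem_Ico] at hk
      exact ⟨⟨k, lt_of_lt_of_le hk.2 hb⟩, by simp [hk.1, hk.2], rfl⟩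
  rw [this, Nat.card_Ico]

theorem fact_prod_lemma (a k : ℕ) :
    (a.factorial : ℕ) * ∏ j : Fin k, (a + j.1 + 1) = (a + k).factorial := by
  induction k with
  | zero => simp
  | succ k ih =>
    rw [Fin.prod_univ_castSucc]
    simp only [Fin.coe_castSucc, Fin.val_last]
    rw [← mul_assoc, ih]
    rw [show a + (k+1) = (a + k) + 1 by omega, Nat.factorial_succ]
    ring

theorem conj_pow_apply {α : Type*} (ρ σ : Equiv.Perm α) (k : ℕ) (y : α) :
    ((ρ * σ * ρ⁻¹) ^ k) (ρ y) = ρ ((σ ^ k) y) := by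
  induction k generalizing y with
  | zero => simp
  | succ k ih =>
    rw [pow_succ, pow_succ]
    simp only [Equiv.Perm.mul_apply]
    rw [(show ∀ z, ρ⁻¹ (ρ z) = z from fun z => ρ.symm_apply_apply z), ih (σ y)]

section Orbit
variable {n : ℕ} (σ : Equiv.Perm (Fin (n+1))) (x : Fin (n+1))

noncomputable def mP : ℕ := Function.minimalPeriod ⇑σ x

theorem x_periodic : x ∈ Function.periodicPts ⇑σ := by
  refine ⟨orderOf σ, orderOf_pos σ, ?_⟩
  show (⇑σ)^[orderOf σ] x = x
  rw [Equiv.Perm.iterate_eq_pow, pow_orderOf_eq_one]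
  rfl

theorem mP_pos : 1 ≤ mP σ x :=
  Function.minimalPeriod_pos_of_mem_periodicPts (x_periodic σ x)

theorem pow_mP_eq : (σ ^ mP σ x) x = x := by
  have := Function.iterate_minimalPeriod (f := ⇑σ) (x := x)
  rwa [Equiv.Perm.iterate_eq_pow] at this

theorem pow_inj_orbit {a b : ℕ} (ha : a < mP σ x) (hb : b < mP σ x)
    (h : (σ ^ a) x = (σ ^ b) x) : a = b := by
  have := Function.iterate_injOn_Iio_minimalPeriod (f := ⇑σ) (x := x)
  exact this (by simpa [mP] using ha) (by simpa [mP] using hb)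
    (by simpa [Equiv.Perm.iterate_eq_pow] using h)

noncomputable def Kor : Finset (Fin (n+1)) :=
  Finset.univ.image (fun j : Fin (mP σ x) => (σ ^ (j.1+1)) x)

theorem Kor_inj : Function.Injective (fun j : Fin (mP σ x) => (σ ^ (j.1+1)) x) := by
  intro a b h
  simp only at h
  have ha : (σ ^ (a.1+1)) x = σ ((σ ^ a.1) x) := by
    rw [pow_succ']; rfl
  have hb : (σ ^ (b.1+1)) x = σ ((σ ^ b.1) x) := by
    rw [pow_succ']; rfl
  rw [ha, hb] at h
  exact Fin.ext (pow_inj_orbit σ x a.isLt b.isLt (σ.injective h))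

theorem Kor_card : (Kor σ x).card = mP σ x := by
  rw [Kor, Finset.card_image_of_injective _ (Kor_inj σ x), Finset.card_univ, Fintype.card_fin]

theorem mP_le : mP σ x ≤ n + 1 := by
  rw [← Kor_card σ x]
  simpa using Finset.card_le_univ (Kor σ x)

theorem mem_Kor_iff {z : Fin (n+1)} : z ∈ Kor σ x ↔ ∃ j : Fin (mP σ x), (σ ^ (j.1+1)) x = z := by
  simp [Kor]

theorem Kor_inv_mem {z : Fin (n+1)} : z ∈ Kor σ x ↔ σ z ∈ Kor σ x := by
  constructor
  · intro hz
    obtain ⟨j, rfl⟩ := (mem_Kor_iff σ x).1 hz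
    rcases Nat.lt_or_ge (j.1 + 1) (mP σ x) with hlt | hge
    · refine (mem_Kor_iff σ x).2 ⟨⟨j.1+1, hlt⟩, ?_⟩
      rw [show j.1+1+1 = (j.1+1)+1 from rfl, pow_succ']
      rfl
    · have hj : j.1 + 1 = mP σ x := by omega
      refine (mem_Kor_iff σ x).2 ⟨⟨0, mP_pos σ x⟩, ?_⟩
      have : σ ((σ ^ (j.1+1)) x) = σ ((σ ^ (mP σ x)) x) := by rw [hj]
      rw [this, pow_mP_eq]
      rw [pow_one]
  · intro hz
    obtain ⟨j, hj⟩ := (mem_Kor_iff σ x).1 hz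
    rcases Nat.eq_zero_or_pos j.1 with h0 | hpos
    · -- σ z = σ x hence z = x = σ^{mP} x
      have : σ z = σ x := by rw [← hj, h0, pow_one]
      have hzx : z = x := σ.injective this
      refine (mem_Kor_iff σ x).2 ⟨⟨mP σ x - 1, by omega⟩, ?_⟩
      rw [hzx]
      have : mP σ x - 1 + 1 = mP σ x := by have := mP_pos σ x; omega
      rw [this, pow_mP_eq]
    · have : σ ((σ ^ j.1) x) = σ z := by
        rw [← hj, pow_succ']; rfl
      have hz' : (σ ^ j.1) x = z := σ.injective this
      refine (mem_Kor_iff σ x).2 ⟨⟨j.1 - 1, by omega⟩, ?_⟩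
      rw [show j.1 - 1 + 1 = j.1 by omega, hz']

noncomputable def Aeq : Fin (mP σ x) ≃ {z : Fin (n+1) // z ∈ Kor σ x} := by
  refine Equiv.ofBijective
    (fun j => ⟨(σ ^ (j.1+1)) x, (mem_Kor_iff σ x).2 ⟨j, rfl⟩⟩) ⟨?_, ?_⟩
  · intro a b h
    exact Kor_inj σ x (Subtype.ext_iff.1 h)
  · rintro ⟨z, hz⟩
    obtain ⟨j, hj⟩ := (mem_Kor_iff σ x).1 hz
    exact ⟨j, Subtype.ext hj⟩

theorem card_not_Kor : Fintype.card {z : Fin (n+1) // z ∉ Kor σ x} = (n+1) - mP σ x := by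
  rw [Fintype.card_subtype_compl]
  rw [Fintype.card_fin]
  congr 1
  rw [Fintype.card_coe]
  exact Kor_card σ x

noncomputable def Eeq : Fin ((n+1) - mP σ x) ≃ {z : Fin (n+1) // z ∉ Kor σ x} :=
  (Fintype.equivFinOfCardEq (card_not_Kor σ x)).symm

noncomputable def srcEq : (Fin ((n+1) - mP σ x) ⊕ Fin (mP σ x)) ≃ Fin (n+1) :=
  (Equiv.sumCongr (Eeq σ x) (Aeq σ x)).trans
    ((Equiv.sumComm _ _).trans (Equiv.sumCompl (fun z => z ∈ Kor σ x)))

noncomputable def tgtEq : (Fin ((n+1) - mP σ x) ⊕ Fin (mP σ x)) ≃ Fin (n+1) :=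
  finSumFinEquiv.trans (finCongr (by have := mP_le σ x; omega))

theorem srcEq_inl (j : Fin ((n+1) - mP σ x)) : srcEq σ x (Sum.inl j) = (Eeq σ x j).1 := by
  simp [srcEq]

theorem srcEq_inr (j : Fin (mP σ x)) : srcEq σ x (Sum.inr j) = (σ ^ (j.1+1)) x := by
  simp [srcEq, Aeq]
  rfl

theorem tgtEq_inl (j : Fin ((n+1) - mP σ x)) : (tgtEq σ x (Sum.inl j)).1 = j.1 := by
  simp [tgtEq]

theorem tgtEq_inr (j : Fin (mP σ x)) : (tgtEq σ x (Sum.inr j)).1 = (n+1) - mP σ x + j.1 := by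
  simp [tgtEq]

end Orbit

section Orbit2
variable {n : ℕ} (σ : Equiv.Perm (Fin (n+1))) (x : Fin (n+1))

theorem not_Kor_inv (z : {z : Fin (n+1) // z ∉ Kor σ x}) : σ z.1 ∉ Kor σ x := by
  intro h
  exact z.2 ((Kor_inv_mem σ x).2 h)

noncomputable def sigSub : Equiv.Perm {z : Fin (n+1) // z ∉ Kor σ x} :=
  σ.subtypePerm (fun z => by
    constructor
    · intro hz hc
      exact hz ((Kor_inv_mem σ x).1 hc)
    · intro hz
      exact not_Kor_inv σ x ⟨z, hz⟩)

noncomputable def sigRest : Equiv.Perm (Fin ((n+1) - mP σ x)) :=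
  ((Eeq σ x).symm.permCongr) (sigSub σ x)

theorem sigRest_apply (j : Fin ((n+1) - mP σ x)) :
    (Eeq σ x (sigRest σ x j)).1 = σ (Eeq σ x j).1 := by
  simp [sigRest, Equiv.permCongr_apply, sigSub, Equiv.Perm.subtypePerm_apply]

theorem finRotate_val {m : ℕ} (hm : 1 ≤ m) (j : Fin m) :
    ((finRotate m) j).1 = if j.1 + 1 = m then 0 else j.1 + 1 := by
  rcases m with _ | m'
  · omega
  · rw [finRotate_succ_apply, Fin.val_add_one]
    by_cases h : j = Fin.last m'
    · subst h
      simp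
    · rw [if_neg h, if_neg ?_]
      have := j.isLt
      have hne : j.1 ≠ m' := fun hc => h (Fin.ext (by simp [hc]))
      omega

theorem Dlemma (s : Fin ((n+1) - mP σ x) ⊕ Fin (mP σ x)) :
    σ (srcEq σ x s) = srcEq σ x (Equiv.sumCongr (sigRest σ x) (finRotate (mP σ x)) s) := by
  rcases s with j | j
  · simp only [Equiv.sumCongr_apply, Sum.map_inl, srcEq_inl]
    exact (sigRest_apply σ x j).symm
  · simp only [Equiv.sumCongr_apply, Sum.map_inr, srcEq_inr]
    have hσj : σ ((σ ^ (j.1+1)) x) = (σ ^ (j.1+1+1)) x := by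
      rw [pow_succ' σ (j.1+1)]; rfl
    rcases Nat.lt_or_ge (j.1+1) (mP σ x) with hlt | hge
    · have hrot : ((finRotate (mP σ x)) j).1 = j.1 + 1 := by
        rw [finRotate_val (mP_pos σ x) j, if_neg (by omega)]
      rw [hσj, hrot]
    · have hj : j.1 + 1 = mP σ x := by have := j.isLt; omega
      have hrot : ((finRotate (mP σ x)) j).1 = 0 := by
        rw [finRotate_val (mP_pos σ x) j, if_pos hj]
      rw [hσj, hrot, hj, pow_succ']
      simp only [Equiv.Perm.mul_apply]
      rw [pow_mP_eq]
      rfl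
end Orbit2

section Orbit3
variable {n : ℕ} (σ : Equiv.Perm (Fin (n+1))) (x : Fin (n+1))

theorem sigma_conj_decomp :
    σ = (srcEq σ x).permCongr (Equiv.sumCongr (sigRest σ x) (finRotate (mP σ x))) := by
  ext z
  rw [Equiv.permCongr_apply]
  have : z = srcEq σ x ((srcEq σ x).symm z) := by simp
  conv_lhs => rw [this]
  rw [Dlemma]

theorem parts_sigma :
    σ.partition.parts = (mP σ x) ::ₘ (sigRest σ x).partition.parts := by
  apply parts_decomp (mP_pos σ x) (mP_le σ x)
  conv_lhs => rw [sigma_conj_decomp σ x]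
  rw [cycleType_permCongr', cycleType_sumCongr']

noncomputable def Phi (p : Equiv.Perm (Fin ((n+1) - mP σ x))) : Equiv.Perm (Fin (n+1)) :=
  ((srcEq σ x).symm.trans ((Equiv.sumCongr p (1 : Equiv.Perm (Fin (mP σ x)))).trans (tgtEq σ x)))

theorem Phi_apply (p : Equiv.Perm (Fin ((n+1) - mP σ x))) (s) :
    Phi σ x p (srcEq σ x s) = tgtEq σ x (Equiv.sumCongr p 1 s) := by
  simp [Phi]

noncomputable def CanSet : Finset (Equiv.Perm (Fin (n+1))) :=
  Finset.univ.filter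
    (fun ρ => ∀ j : Fin (mP σ x), ρ ((σ ^ (j.1+1)) x) = tgtEq σ x (Sum.inr j))

theorem Phi_mem_CanSet (p : Equiv.Perm (Fin ((n+1) - mP σ x))) :
    Phi σ x p ∈ CanSet σ x := by
  rw [CanSet, Finset.mem_filter]
  refine ⟨Finset.mem_univ _, fun j => ?_⟩
  rw [← srcEq_inr σ x j, Phi_apply]
  simp

theorem Phi_inj : Function.Injective (Phi σ x) := by
  intro p q h
  ext j
  have h1 : Phi σ x p (srcEq σ x (Sum.inl j)) = Phi σ x q (srcEq σ x (Sum.inl j)) := by rw [h]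
  rw [Phi_apply, Phi_apply] at h1
  have h2 : (Sum.inl (p j) : Fin ((n+1) - mP σ x) ⊕ Fin (mP σ x)) = Sum.inl (q j) := by
    apply (tgtEq σ x).injective
    simpa using h1
  exact congrArg Fin.val (Sum.inl.inj h2)

theorem Phi_surj (ρ : Equiv.Perm (Fin (n+1))) (hρ : ρ ∈ CanSet σ x) :
    ∃ p, Phi σ x p = ρ := by
  rw [CanSet, Finset.mem_filter] at hρ
  have hCan := hρ.2
  set q : Equiv.Perm (Fin ((n+1) - mP σ x) ⊕ Fin (mP σ x)) :=
    ((srcEq σ x).trans ρ).trans (tgtEq σ x).symm with hq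
  have hq_apply : ∀ s, q s = (tgtEq σ x).symm (ρ (srcEq σ x s)) := fun s => rfl
  have hq_inr : ∀ j, q (Sum.inr j) = Sum.inr j := by
    intro j
    rw [hq_apply, srcEq_inr, hCan j]
    simp
  have hq_inl : ∀ j, ∃ k, q (Sum.inl j) = Sum.inl k := by
    intro j
    rcases hs : q (Sum.inl j) with k | k
    · exact ⟨k, rfl⟩
    · exfalso
      have : q (Sum.inr k) = Sum.inr k := hq_inr k
      have := q.injective (hs.trans this.symm)
      simp at this
  choose f hf using hq_inl
  have hfinj : Function.Injective f := by
    intro a b hab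
    have : q (Sum.inl a) = q (Sum.inl b) := by rw [hf a, hf b, hab]
    simpa using q.injective this
  have hfbij : Function.Bijective f := Finite.injective_iff_bijective.1 hfinj
  refine ⟨Equiv.ofBijective f hfbij, ?_⟩
  ext z
  have hz : z = srcEq σ x ((srcEq σ x).symm z) := by simp
  rw [hz, Phi_apply]
  have hρz : ρ (srcEq σ x ((srcEq σ x).symm z)) = tgtEq σ x (q ((srcEq σ x).symm z)) := by
    rw [hq_apply]
    simp
  rw [hρz]
  congr 1
  rcases (srcEq σ x).symm z with j | j
  · simp only [Equiv.sumCongr_apply, Sum.map_inl]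
    rw [hf j]
    rfl
  · simp only [Equiv.sumCongr_apply, Sum.map_inr]
    rw [hq_inr j]
    simp

end Orbit3

theorem good_struct {n : ℕ} (τ : Equiv.Perm (Fin (n+1)))
    (hgood : ∀ i : Fin (n+1), (τ i).1 ≤ i.1 + 1)
    (i : Fin (n+1)) (hai : (τ (Fin.last n)).1 ≤ i.1) (hin : i.1 < n) :
    (τ i).1 = i.1 + 1 := by
  set U := Finset.univ.filter (fun v : Fin (n+1) => i.1 + 1 ≤ v.1 ∧ v.1 < n + 1) with hU
  set T := Finset.univ.filter (fun j : Fin (n+1) => i.1 ≤ j.1 ∧ j.1 < n) with hT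
  have hUcard : U.card = n - i.1 := by
    rw [hU, fin_filter_card (n+1) (i.1+1) (n+1) le_rfl]
    omega
  have hTcard : T.card = n - i.1 := by
    rw [hT, fin_filter_card (n+1) i.1 n (by omega)]
  have hsub : U.image (fun v => τ⁻¹ v) ⊆ T := by
    intro j hj
    simp only [Finset.mem_image] at hj
    obtain ⟨v, hv, rfl⟩ := hj
    simp only [hU, Finset.mem_filter] at hv
    have hτj : τ (τ⁻¹ v) = v := τ.apply_symm_apply v
    have h1 : v.1 ≤ (τ⁻¹ v).1 + 1 := by
      have := hgood (τ⁻¹ v)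
      rw [hτj] at this
      exact this
    have hjn : (τ⁻¹ v).1 < n := by
      by_contra hc
      push_neg at hc
      have : (τ⁻¹ v) = Fin.last n := by
        apply Fin.ext
        have := (τ⁻¹ v).isLt
        simp only [Fin.val_last]
        omega
      rw [this] at hτj
      have : v.1 ≤ i.1 := by rw [← hτj]; exact hai
      omega
    simp only [hT, Finset.mem_filter]
    refine ⟨Finset.mem_univ _, ?_, hjn⟩
    omega
  have hcardim : (U.image (fun v => τ⁻¹ v)).card = U.card :=
    Finset.card_image_of_injective U (τ⁻¹).injective
  have heq : U.image (fun v => τ⁻¹ v) = T := by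
    apply Finset.eq_of_subset_of_card_le hsub
    rw [hcardim, hUcard, hTcard]
  have hiT : i ∈ T := by
    simp only [hT, Finset.mem_filter]
    exact ⟨Finset.mem_univ _, le_rfl, hin⟩
  rw [← heq] at hiT
  simp only [Finset.mem_image] at hiT
  obtain ⟨v, hv, hvi⟩ := hiT
  have : τ i = v := by rw [← hvi, (show ∀ z, τ (τ⁻¹ z) = z from fun z => τ.apply_symm_apply z)]
  simp only [hU, Finset.mem_filter] at hv
  have := hgood i
  omega


theorem minimalPeriod_congr {α β : Type*} {f : α → α} {g : β → β} {a : α} {b : β}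
    (h : ∀ k, Function.IsPeriodicPt f k a ↔ Function.IsPeriodicPt g k b) :
    Function.minimalPeriod f a = Function.minimalPeriod g b := by
  have hmem : a ∈ Function.periodicPts f ↔ b ∈ Function.periodicPts g := by
    constructor
    · rintro ⟨k, hk, hpt⟩
      exact ⟨k, hk, (h k).1 hpt⟩
    · rintro ⟨k, hk, hpt⟩
      exact ⟨k, hk, (h k).2 hpt⟩
  by_cases ha : a ∈ Function.periodicPts f
  · have hb : b ∈ Function.periodicPts g := hmem.1 ha
    apply le_antisymm
    · exact Function.IsPeriodicPt.minimalPeriod_le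
        (Function.minimalPeriod_pos_of_mem_periodicPts hb)
        ((h _).2 (Function.isPeriodicPt_minimalPeriod g b))
    · exact Function.IsPeriodicPt.minimalPeriod_le
        (Function.minimalPeriod_pos_of_mem_periodicPts ha)
        ((h _).1 (Function.isPeriodicPt_minimalPeriod f a))
  · have hb : b ∉ Function.periodicPts g := fun hc => ha (hmem.2 hc)
    rw [Function.minimalPeriod_eq_zero_of_notMem_periodicPts ha,
      Function.minimalPeriod_eq_zero_of_notMem_periodicPts hb]

theorem minimalPeriod_conj {α : Type*} (ρ σ : Equiv.Perm α) (y : α) :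
    Function.minimalPeriod ⇑(ρ * σ * ρ⁻¹) (ρ y) = Function.minimalPeriod ⇑σ y := by
  apply minimalPeriod_congr
  intro k
  show (⇑(ρ * σ * ρ⁻¹))^[k] (ρ y) = ρ y ↔ (⇑σ)^[k] y = y
  rw [Equiv.Perm.iterate_eq_pow, Equiv.Perm.iterate_eq_pow]
  rw [show (⇑((ρ * σ * ρ⁻¹) ^ k)) (ρ y) = ((ρ * σ * ρ⁻¹) ^ k) (ρ y) from rfl,
    conj_pow_apply]
  exact ⟨fun h => ρ.injective h, fun h => by rw [h]⟩

section Z1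
variable {n : ℕ} (σ : Equiv.Perm (Fin (n+1))) (x : Fin (n+1))

theorem good_can (ρ : Equiv.Perm (Fin (n+1))) (hρx : ρ x = Fin.last n)
    (hgood : ∀ i, ((ρ * σ * ρ⁻¹) i).1 ≤ i.1 + 1) : ρ ∈ CanSet σ x := by
  set τ := ρ * σ * ρ⁻¹ with hτ
  have hαlt : (τ (Fin.last n)).1 ≤ n := by have := (τ (Fin.last n)).isLt; omega
  set α := (τ (Fin.last n)).1 with hα
  have claim1 : ∀ k, k < (n+1) - α → ((τ ^ (k+1)) (Fin.last n)).1 = α + k := by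
    intro k
    induction k with
    | zero => intro _; simp [hα]
    | succ k ih =>
      intro hk
      have hk' : k < (n+1) - α := by omega
      have ihv := ih hk'
      have hstep : (τ ((τ ^ (k+1)) (Fin.last n))).1 = ((τ ^ (k+1)) (Fin.last n)).1 + 1 := by
        apply good_struct τ hgood
        · omega
        · omega
      have : (τ ^ (k+1+1)) (Fin.last n) = τ ((τ ^ (k+1)) (Fin.last n)) := by
        rw [pow_succ']; rfl
      rw [this, hstep, ihv]
      omega
  have claim2 : Function.minimalPeriod ⇑τ (Fin.last n) = (n+1) - α := by
    have hper : Function.IsPeriodicPt ⇑τ ((n+1) - α) (Fin.last n) := by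
      show (⇑τ)^[(n+1) - α] (Fin.last n) = Fin.last n
      rw [Equiv.Perm.iterate_eq_pow]
      have h1 : (n+1) - α = (n - α) + 1 := by omega
      have := claim1 (n - α) (by omega)
      apply Fin.ext
      rw [Fin.val_last]
      rw [h1]
      show ((τ ^ (n - α + 1)) (Fin.last n)).1 = n
      omega
    apply le_antisymm
    · exact Function.IsPeriodicPt.minimalPeriod_le (by omega) hper
    · by_contra hc
      push_neg at hc
      set mp := Function.minimalPeriod ⇑τ (Fin.last n) with hmp
      have hmp_pos : 1 ≤ mp := by
        apply Function.minimalPeriod_pos_of_mem_periodicPts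
        exact ⟨(n+1) - α, by omega, hper⟩
      have hfix : (τ ^ mp) (Fin.last n) = Fin.last n := by
        have := Function.isPeriodicPt_minimalPeriod ⇑τ (Fin.last n)
        rwa [← hmp, Function.IsPeriodicPt, Function.IsFixedPt, Equiv.Perm.iterate_eq_pow] at this
      have h1 : mp = (mp - 1) + 1 := by omega
      have := claim1 (mp - 1) (by omega)
      rw [← h1] at this
      rw [hfix] at this
      simp only [Fin.val_last] at this
      omega
  have hmPα : mP σ x = (n+1) - α := by
    rw [mP, ← minimalPeriod_conj ρ σ x, hρx, ← hτ, claim2]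
  rw [CanSet, Finset.mem_filter]
  refine ⟨Finset.mem_univ _, fun j => ?_⟩
  have hj1 : ρ ((σ ^ (j.1+1)) x) = (τ ^ (j.1+1)) (ρ x) := (conj_pow_apply ρ σ (j.1+1) x).symm
  apply Fin.ext
  rw [hj1, hρx, tgtEq_inr]
  have hjlt : j.1 < (n+1) - α := by have := j.isLt; omega
  rw [claim1 j.1 hjlt]
  omega
end Z1


theorem Zmat_val {N M : ℕ} (u v : Fin N) (j k : Fin M) (hu : u.1 = j.1) (hv : v.1 = k.1) :
    Zmat N u v = Zmat M j k := by
  simp only [Zmat, hu, hv]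

theorem top_prod_general {N m : ℕ} (hm : 1 ≤ m) (hmN : m ≤ N)
    (g r : Fin m → Fin N)
    (hg : ∀ j, (g j).1 = N - m + j.1)
    (hr : ∀ j, (r j).1 = N - m + (if j.1 + 1 = m then 0 else j.1 + 1)) :
    ∏ j : Fin m, Zmat N (g j) (r j)
      = (↑(∏ k ∈ Finset.range (m-1), (N - m + k + 1)) : MvPolynomial ℕ ℚ) * X m := by
  obtain ⟨m'', rfl⟩ : ∃ m'', m = m'' + 1 := ⟨m - 1, by omega⟩
  rw [Fin.prod_univ_castSucc]
  have hlast : Zmat N (g (Fin.last m'')) (r (Fin.last m'')) = X (m'' + 1) := by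
    have hgv : (g (Fin.last m'')).1 = N - 1 := by rw [hg]; simp; omega
    have hrv : (r (Fin.last m'')).1 = N - (m''+1) := by rw [hr]; simp
    rw [Zmat]
    simp only [hgv, hrv]
    rw [if_pos (by omega)]
    congr 1
    omega
  have hcast : ∀ j : Fin m'', Zmat N (g j.castSucc) (r j.castSucc)
      = ((N - (m''+1) + j.1 + 1 : ℕ) : MvPolynomial ℕ ℚ) := by
    intro j
    have hgv : (g j.castSucc).1 = N - (m''+1) + j.1 := by rw [hg]; simp
    have hrv : (r j.castSucc).1 = N - (m''+1) + j.1 + 1 := by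
      rw [hr]
      have : (j.castSucc).1 = j.1 := rfl
      rw [this, if_neg (by have := j.isLt; omega)]
      omega
    rw [Zmat]
    simp only [hgv, hrv]
    rw [if_neg (by omega), if_pos trivial]
    push_cast
    ring
  rw [hlast]
  congr 1
  rw [Finset.prod_congr rfl (fun j _ => hcast j)]
  rw [Nat.cast_prod]
  rw [Fin.prod_univ_eq_prod_range (fun k => ((N - (m''+1) + k + 1 : ℕ) : MvPolynomial ℕ ℚ)) m'']
  simp

section TauPhi
variable {n : ℕ} (σ : Equiv.Perm (Fin (n+1))) (x : Fin (n+1))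

theorem tau_phi (p : Equiv.Perm (Fin ((n+1) - mP σ x))) (s) :
    (Phi σ x p * σ * (Phi σ x p)⁻¹) (tgtEq σ x s)
      = tgtEq σ x (Equiv.sumCongr (p * sigRest σ x * p⁻¹) (finRotate (mP σ x)) s) := by
  have hinv : (Phi σ x p)⁻¹ (tgtEq σ x s)
      = srcEq σ x (Equiv.sumCongr p⁻¹ (1 : Equiv.Perm (Fin (mP σ x))) s) := by
    apply (Phi σ x p).injective
    rw [(show ∀ z, Phi σ x p ((Phi σ x p)⁻¹ z) = z from fun z => (Phi σ x p).apply_symm_apply z)]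
    rw [Phi_apply]
    congr 1
    rcases s with j | j
    · simp
    · simp
  simp only [Equiv.Perm.mul_apply]
  rw [hinv, Dlemma, Phi_apply]
  congr 1
  rcases s with j | j
  · simp only [Equiv.sumCongr_apply, Sum.map_inl]
    rfl
  · simp only [Equiv.sumCongr_apply, Sum.map_inr]
    rfl
end TauPhi

section StepSum
variable {n : ℕ} (σ : Equiv.Perm (Fin (n+1))) (x : Fin (n+1))

theorem F_phi (p : Equiv.Perm (Fin ((n+1) - mP σ x))) :
    (∏ i, Zmat (n+1) i ((Phi σ x p * σ * (Phi σ x p)⁻¹) i))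
    = ((∏ k ∈ Finset.range (mP σ x - 1), ((n+1) - mP σ x + k + 1) : ℕ) : MvPolynomial ℕ ℚ)
        * X (mP σ x)
      * ∏ j, Zmat ((n+1) - mP σ x) j ((p * sigRest σ x * p⁻¹) j) := by
  rw [← Equiv.prod_comp (tgtEq σ x)
    (fun i => Zmat (n+1) i ((Phi σ x p * σ * (Phi σ x p)⁻¹) i))]
  simp only [tau_phi σ x p]
  rw [Fintype.prod_sum_type]
  have hbot : ∀ j : Fin ((n+1) - mP σ x),
      Zmat (n+1) (tgtEq σ x (Sum.inl j))
        (tgtEq σ x (Equiv.sumCongr (p * sigRest σ x * p⁻¹) (finRotate (mP σ x)) (Sum.inl j)))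
      = Zmat ((n+1) - mP σ x) j ((p * sigRest σ x * p⁻¹) j) := by
    intro j
    apply Zmat_val
    · exact tgtEq_inl σ x j
    · exact tgtEq_inl σ x _
  have htop : (∏ j : Fin (mP σ x),
      Zmat (n+1) (tgtEq σ x (Sum.inr j))
        (tgtEq σ x (Equiv.sumCongr (p * sigRest σ x * p⁻¹) (finRotate (mP σ x)) (Sum.inr j))))
      = ((∏ k ∈ Finset.range (mP σ x - 1), ((n+1) - mP σ x + k + 1) : ℕ) : MvPolynomial ℕ ℚ)
        * X (mP σ x) := by
    apply top_prod_general (mP_pos σ x) (mP_le σ x)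
    · intro j
      exact tgtEq_inr σ x j
    · intro j
      have : (Equiv.sumCongr (p * sigRest σ x * p⁻¹) (finRotate (mP σ x)) (Sum.inr j))
          = Sum.inr ((finRotate (mP σ x)) j) := rfl
      rw [this, tgtEq_inr, finRotate_val (mP_pos σ x)]
  rw [Finset.prod_congr rfl (fun j _ => hbot j), htop]
  ring

theorem step_sum
    (IH : ∀ k, k < n + 1 → ∀ σ'' : Equiv.Perm (Fin k),
      (∑ p : Equiv.Perm (Fin k), ∏ j, Zmat k j ((p * σ'' * p⁻¹) j))
        = (k.factorial : MvPolynomial ℕ ℚ) * ((σ''.partition.parts).map X).prod) :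
    (∑ ρ ∈ Finset.univ.filter (fun ρ : Equiv.Perm (Fin (n+1)) => ρ x = Fin.last n),
      ∏ i, Zmat (n+1) i ((ρ * σ * ρ⁻¹) i))
      = (n.factorial : MvPolynomial ℕ ℚ) * ((σ.partition.parts).map X).prod := by
  have hm1 := mP_pos σ x
  have hmN := mP_le σ x
  have hsub : CanSet σ x ⊆ Finset.univ.filter
      (fun ρ : Equiv.Perm (Fin (n+1)) => ρ x = Fin.last n) := by
    intro ρ hρ
    rw [CanSet, Finset.mem_filter] at hρ
    simp only [Finset.mem_filter, Finset.mem_univ, true_and]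
    have hj := hρ.2 ⟨mP σ x - 1, by omega⟩
    have hpow : (σ ^ (mP σ x - 1 + 1)) x = x := by
      rw [show mP σ x - 1 + 1 = mP σ x by omega, pow_mP_eq]
    rw [hpow] at hj
    rw [hj]
    apply Fin.ext
    rw [tgtEq_inr]
    simp only [Fin.val_last]
    omega
  have hvanish : ∀ ρ ∈ Finset.univ.filter
      (fun ρ : Equiv.Perm (Fin (n+1)) => ρ x = Fin.last n),
      ρ ∉ CanSet σ x → (∏ i, Zmat (n+1) i ((ρ * σ * ρ⁻¹) i)) = 0 := by
    intro ρ hρ hρc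
    by_contra hF
    apply hρc
    apply good_can σ x ρ (Finset.mem_filter.1 hρ).2
    intro i
    by_contra hbad
    push_neg at hbad
    apply hF
    apply Finset.prod_eq_zero (Finset.mem_univ i)
    simp only [Zmat]
    rw [if_neg (by omega), if_neg (by omega)]
  rw [← Finset.sum_subset hsub hvanish]
  have hbij : (∑ ρ ∈ CanSet σ x, ∏ i, Zmat (n+1) i ((ρ * σ * ρ⁻¹) i))
      = ∑ p : Equiv.Perm (Fin ((n+1) - mP σ x)),
          ∏ i, Zmat (n+1) i ((Phi σ x p * σ * (Phi σ x p)⁻¹) i) := by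
    rw [eq_comm]
    apply Finset.sum_bij (fun p _ => Phi σ x p)
    · intro p _
      exact Phi_mem_CanSet σ x p
    · intro p _ q _ h
      exact Phi_inj σ x h
    · intro ρ hρ
      obtain ⟨p, hp⟩ := Phi_surj σ x ρ hρ
      exact ⟨p, Finset.mem_univ _, hp⟩
    · intro p _
      rfl
  rw [hbij]
  rw [Finset.sum_congr rfl (fun p _ => F_phi σ x p), ← Finset.mul_sum]
  rw [IH ((n+1) - mP σ x) (by omega) (sigRest σ x)]
  rw [parts_sigma σ x, Multiset.map_cons, Multiset.prod_cons]
  have hnum : (((n+1) - mP σ x).factorial : ℕ)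
      * (∏ k ∈ Finset.range (mP σ x - 1), ((n+1) - mP σ x + k + 1)) = n.factorial := by
    have hfp := fact_prod_lemma ((n+1) - mP σ x) (mP σ x - 1)
    rw [Fin.prod_univ_eq_prod_range (fun k => ((n+1) - mP σ x + k + 1)) (mP σ x - 1)] at hfp
    rw [hfp]
    congr 1
    omega
  have : ((n.factorial : ℕ) : MvPolynomial ℕ ℚ)
      = ((((n+1) - mP σ x).factorial : ℕ) : MvPolynomial ℕ ℚ)
        * ((∏ k ∈ Finset.range (mP σ x - 1), ((n+1) - mP σ x + k + 1) : ℕ)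
            : MvPolynomial ℕ ℚ) := by
    rw [← Nat.cast_mul, hnum]
  rw [this]
  ring
end StepSum

theorem Mlem (N : ℕ) : ∀ (σ : Equiv.Perm (Fin N)),
    (∑ ρ : Equiv.Perm (Fin N), ∏ i, Zmat N i ((ρ * σ * ρ⁻¹) i))
      = (N.factorial : MvPolynomial ℕ ℚ) * ((σ.partition.parts).map X).prod := by
  induction N using Nat.strong_induction_on with
  | _ N IH =>
    cases N with
    | zero =>
      intro σ
      have hσ : σ = 1 := Subsingleton.elim σ 1
      subst hσ
      have hparts : (1 : Equiv.Perm (Fin 0)).partition.parts = 0 := by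
        rw [Equiv.Perm.parts_partition]
        simp [Equiv.Perm.cycleType_one]
      rw [hparts]
      simp
    | succ n =>
      intro σ
      rw [← Finset.sum_fiberwise_of_maps_to
        (g := fun ρ : Equiv.Perm (Fin (n+1)) => ρ⁻¹ (Fin.last n))
        (fun ρ _ => Finset.mem_univ _)
        (fun ρ => ∏ i, Zmat (n+1) i ((ρ * σ * ρ⁻¹) i))]
      have hfilter : ∀ x : Fin (n+1),
          (Finset.univ.filter (fun ρ : Equiv.Perm (Fin (n+1)) => ρ⁻¹ (Fin.last n) = x))
          = Finset.univ.filter (fun ρ => ρ x = Fin.last n) := by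
        intro x
        apply Finset.filter_congr
        intro ρ _
        constructor
        · intro h
          rw [← h, (show ∀ z, ρ (ρ⁻¹ z) = z from fun z => ρ.apply_symm_apply z)]
        · intro h
          rw [← h, (show ∀ z, ρ⁻¹ (ρ z) = z from fun z => ρ.symm_apply_apply z)]
      have hstep : ∀ x : Fin (n+1),
          (∑ ρ ∈ Finset.univ.filter
              (fun ρ : Equiv.Perm (Fin (n+1)) => ρ⁻¹ (Fin.last n) = x),
            ∏ i, Zmat (n+1) i ((ρ * σ * ρ⁻¹) i))
          = (n.factorial : MvPolynomial ℕ ℚ) * ((σ.partition.parts).map X).prod := by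
        intro x
        rw [hfilter x]
        exact step_sum σ x (fun k hk => IH k hk)
      rw [Finset.sum_congr rfl (fun x _ => hstep x)]
      simp only [Finset.sum_const, Finset.card_univ, Fintype.card_fin, nsmul_eq_mul]
      rw [Nat.factorial_succ]
      push_cast
      ring

theorem conj_class_sum {N : ℕ} (σ₀ : Equiv.Perm (Fin N)) {M : Type*} [AddCommMonoid M]
    (f : Equiv.Perm (Fin N) → M) :
    (∑ ρ : Equiv.Perm (Fin N), f (ρ * σ₀ * ρ⁻¹))
    = (Finset.univ.filter (fun d : Equiv.Perm (Fin N) => d * σ₀ * d⁻¹ = σ₀)).card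
        • ∑ τ : Equiv.Perm (Fin N),
            (if τ.partition.parts = σ₀.partition.parts then f τ else 0) := by
  rw [← Finset.sum_fiberwise_of_maps_to
    (g := fun ρ : Equiv.Perm (Fin N) => ρ * σ₀ * ρ⁻¹)
    (fun ρ _ => Finset.mem_univ _)
    (fun ρ => f (ρ * σ₀ * ρ⁻¹))]
  rw [Finset.smul_sum]
  apply Finset.sum_congr rfl
  intro τ _
  by_cases hconj : τ.partition.parts = σ₀.partition.parts
  · have hIsConj : IsConj σ₀ τ := by
      rw [Equiv.Perm.partition_eq_of_isConj]
      exact Nat.Partition.ext hconj.symm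
    obtain ⟨c, hc⟩ := isConj_iff.1 hIsConj
    rw [if_pos hconj]
    have hterm : ∀ ρ ∈ Finset.univ.filter
        (fun ρ : Equiv.Perm (Fin N) => ρ * σ₀ * ρ⁻¹ = τ), f (ρ * σ₀ * ρ⁻¹) = f τ := by
      intro ρ hρ
      rw [(Finset.mem_filter.1 hρ).2]
    rw [Finset.sum_congr rfl hterm, Finset.sum_const]
    congr 1
    apply Finset.card_bij (fun d _ => c⁻¹ * d)
    · intro d hd
      simp only [Finset.mem_filter, Finset.mem_univ, true_and] at hd ⊢
      calc c⁻¹ * d * σ₀ * (c⁻¹ * d)⁻¹ = c⁻¹ * (d * σ₀ * d⁻¹) * c := by group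
        _ = c⁻¹ * τ * c := by rw [hd]
        _ = c⁻¹ * (c * σ₀ * c⁻¹) * c := by rw [hc]
        _ = σ₀ := by group
    · intro a _ b _ h
      exact mul_left_cancel h
    · intro d hd
      simp only [Finset.mem_filter, Finset.mem_univ, true_and] at hd
      refine ⟨c * d, ?_, by group⟩
      simp only [Finset.mem_filter, Finset.mem_univ, true_and]
      calc c * d * σ₀ * (c * d)⁻¹ = c * (d * σ₀ * d⁻¹) * c⁻¹ := by group
        _ = c * σ₀ * c⁻¹ := by rw [hd]
        _ = τ := hc
  · rw [if_neg hconj, smul_zero]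
    apply Finset.sum_eq_zero
    intro ρ hρ
    exfalso
    apply hconj
    have hIsConj : IsConj σ₀ τ := isConj_iff.2 ⟨ρ, (Finset.mem_filter.1 hρ).2⟩
    rw [Equiv.Perm.partition_eq_of_isConj] at hIsConj
    rw [hIsConj]


end CFaux


/-- `d_γ`: the number of permutations in `S_q` of cycle type `γ` (cycle type taken to
include fixed points as parts equal to `1`). -/
noncomputable def numOfCycleType (q : ℕ) (g : Nat.Partition q) : ℕ :=
  Nat.card {π : Equiv.Perm (Fin q) // π.partition.parts = g.parts}

/-- The cycle format polynomial `CF_γ(Z) = Σ_{π of cycle type γ} ∏ᵢ Z_{i,π(i)}` equals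
`d_γ · ζ^γ`. -/
theorem cycleFormat_Zmat (q : ℕ) (g : Nat.Partition q) :
    (∑ π : Equiv.Perm (Fin q),
        if π.partition.parts = g.parts then ∏ i, Zmat q i (π i) else 0) =
      (numOfCycleType q g : MvPolynomial ℕ ℚ) * (g.parts.map X).prod := by
  by_cases hex : ∃ σ₀ : Equiv.Perm (Fin q), σ₀.partition.parts = g.parts
  · obtain ⟨σ₀, hσ₀⟩ := hex
    have key := conj_class_sum σ₀ (fun τ => ∏ i, Zmat q i (τ i))
    rw [Mlem q σ₀] at key
    have count := conj_class_sum σ₀ (fun _ => (1 : ℕ))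
    simp only [Finset.sum_const, Finset.card_univ, Fintype.card_perm, Fintype.card_fin,
      smul_eq_mul, mul_one] at count
    simp only [hσ₀] at key count
    have hN : (∑ τ : Equiv.Perm (Fin q),
        if τ.partition.parts = g.parts then (1:ℕ) else 0) = numOfCycleType q g := by
      rw [numOfCycleType, Nat.card_eq_fintype_card, Fintype.card_subtype]
      rw [Finset.card_filter]
    rw [hN] at count
    have hCpos : 0 < (Finset.univ.filter
        (fun d : Equiv.Perm (Fin q) => d * σ₀ * d⁻¹ = σ₀)).card := by
      apply Finset.card_pos.2
      exact ⟨1, by simp⟩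
    set C := (Finset.univ.filter
        (fun d : Equiv.Perm (Fin q) => d * σ₀ * d⁻¹ = σ₀)).card with hC
    apply mul_left_cancel₀
      (show ((C : ℕ) : MvPolynomial ℕ ℚ) ≠ 0 from Nat.cast_ne_zero.2 hCpos.ne')
    rw [← nsmul_eq_mul, ← key, count]
    push_cast
    ring
  · have h1 : (∑ π : Equiv.Perm (Fin q),
        if π.partition.parts = g.parts then ∏ i, Zmat q i (π i) else 0) = 0 :=
      Finset.sum_eq_zero fun π _ => if_neg (fun h => hex ⟨π, h⟩)
    have h2 : numOfCycleType q g = 0 := by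
      rw [numOfCycleType]
      have : IsEmpty {π : Equiv.Perm (Fin q) // π.partition.parts = g.parts} :=
        ⟨fun ⟨π, hπ⟩ => hex ⟨π, hπ⟩⟩
      exact Nat.card_of_isEmpty
    rw [h1, h2]
    simp
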